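/- arXiv:2305.19442 — 2 statements merged into one kernel-verified Lean document; each statement's English description precedes it below -/
import Mathlib

section
/- Let $g: \mathbb{R}^{d} \to \mathbb{R}$ be $\mu$-strongly convex and $L$-smooth (i.e., $\nabla g$ is $L$-Lipschitz). Then for all $y_0, y_1, y_2 \in \mathbb{R}^d$: $\langle \nabla g(y_0), y_1 - y_2 \rangle \ge g(y_1) - g(y_2) + \frac{\mu}{4}\|y_1 - y_2\|^2 - L \|y_1 - y_0\|^2$. -/
/-!
Strong convexity at `y₀` bounds `g y₂` from below by the linearization at `y₀`, and strong
convexity at `y₁` together with the Lipschitz gradient bounds `g y₁` from above by the same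
linearization, up to `(L - μ/2) ‖y₁ - y₀‖²`. Subtracting the two bounds leaves
`-(μ/2) (‖y₁ - y₀‖² + ‖y₀ - y₂‖²)`, which is at most `-(μ/4) ‖y₁ - y₂‖²`.
-/

open scoped InnerProductSpace

theorem norm_sub_sq_le_two_mul_add {E : Type*} [SeminormedAddCommGroup E] (x y z : E) :
    ‖x - z‖ ^ 2 ≤ 2 * (‖x - y‖ ^ 2 + ‖y - z‖ ^ 2) :=
  (pow_le_pow_left₀ (norm_nonneg _) (norm_sub_le_norm_sub_add_norm_sub x y z) 2).trans add_sq_le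

section Gradient

variable {E : Type*} [NormedAddCommGroup E] [InnerProductSpace ℝ E]

theorem inner_sub_le_of_lipschitz {L : ℝ} {g' : E → E}
    (hlip : ∀ y z, ‖g' y - g' z‖ ≤ L * ‖y - z‖) (x y : E) :
    ⟪g' x - g' y, x - y⟫_ℝ ≤ L * ‖x - y‖ ^ 2 :=
  calc ⟪g' x - g' y, x - y⟫_ℝ ≤ ‖g' x - g' y‖ * ‖x - y‖ := real_inner_le_norm _ _
    _ ≤ L * ‖x - y‖ * ‖x - y‖ := by gcongr; exact hlip x y
    _ = L * ‖x - y‖ ^ 2 := by ring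

theorem le_add_inner_add_of_strongConvex_of_lipschitz {μ L : ℝ} {g : E → ℝ} {g' : E → E}
    (hsc : ∀ y z, g y + ⟪g' y, z - y⟫_ℝ + μ / 2 * ‖z - y‖ ^ 2 ≤ g z)
    (hlip : ∀ y z, ‖g' y - g' z‖ ≤ L * ‖y - z‖) (x y : E) :
    g x ≤ g y + ⟪g' y, x - y⟫_ℝ + (L - μ / 2) * ‖x - y‖ ^ 2 := by
  have hconv := hsc x y
  have hgrad := inner_sub_le_of_lipschitz hlip x y
  rw [inner_sub_left] at hgrad
  rw [← neg_sub x y, inner_neg_right, norm_neg] at hconv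
  linarith

end Gradient

theorem stmt_3_general {d : ℕ} (μ L : ℝ) (hμ : 0 < μ)
    (g : EuclideanSpace ℝ (Fin d) → ℝ)
    (g' : EuclideanSpace ℝ (Fin d) → EuclideanSpace ℝ (Fin d))
    (hsc : ∀ y z, g y + ⟪g' y, z - y⟫_ℝ + μ / 2 * ‖z - y‖ ^ 2 ≤ g z)
    (hsmooth : ∀ y z, ‖g' y - g' z‖ ≤ L * ‖y - z‖)
    (y0 y1 y2 : EuclideanSpace ℝ (Fin d)) :
    g y1 - g y2 + μ / 4 * ‖y1 - y2‖ ^ 2 - L * ‖y1 - y0‖ ^ 2 ≤ ⟪g' y0, y1 - y2⟫_ℝ := by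
  have hlower := hsc y0 y2
  have hupper := le_add_inner_add_of_strongConvex_of_lipschitz hsc hsmooth y1 y0
  have hsplit : ⟪g' y0, y1 - y2⟫_ℝ = ⟪g' y0, y1 - y0⟫_ℝ + ⟪g' y0, y0 - y2⟫_ℝ := by
    rw [← inner_add_right, sub_add_sub_cancel]
  have hdist := mul_le_mul_of_nonneg_left (norm_sub_sq_le_two_mul_add y1 y0 y2) hμ.le
  rw [← neg_sub y0 y2, inner_neg_right, norm_neg] at hlower
  linarith

/-- Perturbed strong convexity (Lemma C.1 of the paper). -/
theorem stmt_3 {d : ℕ} (μ L : ℝ) (hμ : 0 < μ) (hL : 0 < L)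
    (g : EuclideanSpace ℝ (Fin d) → ℝ)
    (g' : EuclideanSpace ℝ (Fin d) → EuclideanSpace ℝ (Fin d))
    (hsc : ∀ y z, g y + ⟪g' y, z - y⟫_ℝ + μ / 2 * ‖z - y‖ ^ 2 ≤ g z)
    (hsmooth : ∀ y z, ‖g' y - g' z‖ ≤ L * ‖y - z‖)
    (y0 y1 y2 : EuclideanSpace ℝ (Fin d)) :
    g y1 - g y2 + μ / 4 * ‖y1 - y2‖ ^ 2 - L * ‖y1 - y0‖ ^ 2 ≤ ⟪g' y0, y1 - y2⟫_ℝ :=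
  stmt_3_general μ L hμ g g' hsc hsmooth y0 y1 y2
end

section
/- Let $g: \mathbb{R}^{d} \to \mathbb{R}$ be $\mu$-strongly convex with minimizer $y^*$ and $L$-smooth, and consider one inexact gradient step $y^+ = y - \gamma h$ where $\mathbb{E}[h] = \sum_k \theta_k \nabla g(y_k)$ is a convex combination ($\theta_k \ge 0$, $\sum_k \theta_k = 1$) of gradients at perturbed points $y_k$. Then $\mathbb{E}\|y^+ - y^*\|^2 \le \left(1 - \frac{\gamma\mu}{2}\right)\|y - y^*\|^2 + \gamma^2 \mathbb{E}\|h\|^2 + 2\gamma L \sum_k \theta_k \|y - y_k\|^2$. -/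
/-!
Split `⟪∇g(yₖ), y - y*⟫` at `yₖ`. Convexity together with the `L`-Lipschitz gradient bounds the
piece `⟪∇g(yₖ), y - yₖ⟫` below by `g y - g yₖ - L‖y - yₖ‖²`, and convexity bounds
`⟪∇g(yₖ), yₖ - y*⟫` below by `g yₖ - g y*`. Strong convexity written at the midpoint of `y*` and `y`
gives the quadratic growth `g y - g y* ≥ μ/4 ‖y - y*‖²`, so
`⟪∇g(yₖ), y - y*⟫ ≥ μ/4 ‖y - y*‖² - L‖y - yₖ‖²`. Averaging with the weights `θₖ` bounds the cross
term in the expansion of `E‖(y - y*) - γh‖²`.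
-/

open MeasureTheory
open scoped InnerProductSpace

section FirstOrder

variable {E : Type*} [NormedAddCommGroup E] [InnerProductSpace ℝ E]
  {g : E → ℝ} {g' : E → E} {μ L : ℝ}

theorem quadratic_growth_of_strongly_convex
    (hsc : ∀ y z, g y + ⟪g' y, z - y⟫_ℝ + μ / 2 * ‖z - y‖ ^ 2 ≤ g z)
    {ystar : E} (hmin : ∀ z, g ystar ≤ g z) (w : E) :
    μ / 4 * ‖w - ystar‖ ^ 2 ≤ g w - g ystar := by
  set v := w - ystar
  set m := ystar + (2⁻¹ : ℝ) • v
  have hleft : ystar - m = -((2⁻¹ : ℝ) • v) := by simp only [m]; abel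
  have hright : w - m = (2⁻¹ : ℝ) • v := by simp only [m, v]; module
  have hhalf : ‖(2⁻¹ : ℝ) • v‖ ^ 2 = ‖v‖ ^ 2 / 4 := by
    rw [norm_smul, mul_pow, Real.norm_eq_abs, sq_abs]; ring
  have h1 := hsc m ystar
  have h2 := hsc m w
  rw [hleft, inner_neg_right, norm_neg, hhalf] at h1
  rw [hright, hhalf] at h2
  linarith [hmin m]

theorem le_add_inner_add_sq_of_lipschitz_grad
    (hconv : ∀ y z, g y + ⟪g' y, z - y⟫_ℝ ≤ g z)
    (hsmooth : ∀ y z, ‖g' y - g' z‖ ≤ L * ‖y - z‖) (a b : E) :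
    g b ≤ g a + ⟪g' a, b - a⟫_ℝ + L * ‖b - a‖ ^ 2 := by
  have hcross : ⟪g' b - g' a, b - a⟫_ℝ ≤ L * ‖b - a‖ ^ 2 :=
    calc ⟪g' b - g' a, b - a⟫_ℝ ≤ ‖g' b - g' a‖ * ‖b - a‖ := real_inner_le_norm _ _
      _ ≤ L * ‖b - a‖ * ‖b - a‖ := by gcongr; exact hsmooth b a
      _ = L * ‖b - a‖ ^ 2 := by ring
  have hsplit : ⟪g' b, a - b⟫_ℝ = -⟪g' a, b - a⟫_ℝ - ⟪g' b - g' a, b - a⟫_ℝ := by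
    rw [← neg_sub b a, inner_neg_right, inner_sub_left]; ring
  linarith [hconv b a]

theorem le_inner_grad_sub_minimizer
    (hsc : ∀ y z, g y + ⟪g' y, z - y⟫_ℝ + μ / 2 * ‖z - y‖ ^ 2 ≤ g z) (hμ : 0 ≤ μ)
    (hsmooth : ∀ y z, ‖g' y - g' z‖ ≤ L * ‖y - z‖)
    {ystar : E} (hmin : ∀ z, g ystar ≤ g z) (x y : E) :
    μ / 4 * ‖y - ystar‖ ^ 2 - L * ‖y - x‖ ^ 2 ≤ ⟪g' x, y - ystar⟫_ℝ := by
  have hconv : ∀ y z, g y + ⟪g' y, z - y⟫_ℝ ≤ g z := fun y z =>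
    (le_add_of_nonneg_right (by positivity)).trans (hsc y z)
  have hdescent := le_add_inner_add_sq_of_lipschitz_grad hconv hsmooth x y
  have hgrowth := quadratic_growth_of_strongly_convex hsc hmin y
  have hsplit : ⟪g' x, y - ystar⟫_ℝ = ⟪g' x, y - x⟫_ℝ - ⟪g' x, ystar - x⟫_ℝ := by
    rw [← inner_sub_right, sub_sub_sub_cancel_right]
  linarith [hconv x ystar]

theorem sub_sum_mul_le_inner_sum_smul {ι : Type*} {s : Finset ι} {θ : ι → ℝ}
    (hθ : ∀ k ∈ s, 0 ≤ θ k) (hθ1 : ∑ k ∈ s, θ k = 1) {a : ℝ} {b : ι → ℝ} {u : E} {v : ι → E}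
    (hle : ∀ k ∈ s, a - b k ≤ ⟪u, v k⟫_ℝ) :
    a - ∑ k ∈ s, θ k * b k ≤ ⟪u, ∑ k ∈ s, θ k • v k⟫_ℝ :=
  calc a - ∑ k ∈ s, θ k * b k = ∑ k ∈ s, θ k * (a - b k) := by
        simp only [mul_sub, Finset.sum_sub_distrib, ← Finset.sum_mul, hθ1, one_mul]
    _ ≤ ∑ k ∈ s, θ k * ⟪u, v k⟫_ℝ :=
        Finset.sum_le_sum fun k hk => mul_le_mul_of_nonneg_left (hle k hk) (hθ k hk)
    _ = ⟪u, ∑ k ∈ s, θ k • v k⟫_ℝ := by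
        simp only [inner_sum, real_inner_smul_right]

end FirstOrder

theorem integral_norm_sub_smul_sq {Ω E : Type*} [MeasurableSpace Ω] {P : Measure Ω}
    [IsProbabilityMeasure P] [NormedAddCommGroup E] [InnerProductSpace ℝ E] [CompleteSpace E]
    {h : Ω → E} (hh : MemLp h 2 P) (x : E) (γ : ℝ) :
    ∫ ω, ‖x - γ • h ω‖ ^ 2 ∂P
      = ‖x‖ ^ 2 - 2 * γ * ⟪x, ∫ ω, h ω ∂P⟫_ℝ + γ ^ 2 * ∫ ω, ‖h ω‖ ^ 2 ∂P := by
  have hint : Integrable h P := hh.integrable one_le_two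
  have hcross : Integrable (fun ω => ⟪x, h ω⟫_ℝ) P := hint.const_inner x
  have hsq : Integrable (fun ω => ‖h ω‖ ^ 2) P := hh.norm.integrable_sq
  have hexpand : ∀ ω, ‖x - γ • h ω‖ ^ 2
      = ‖x‖ ^ 2 - 2 * γ * ⟪x, h ω⟫_ℝ + γ ^ 2 * ‖h ω‖ ^ 2 := fun ω => by
    rw [norm_sub_sq_real, real_inner_smul_right, norm_smul, Real.norm_eq_abs, mul_pow, sq_abs]
    ring
  simp_rw [hexpand]
  rw [integral_add (by exact (integrable_const _).sub (hcross.const_mul _)) (hsq.const_mul _),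
    integral_sub (integrable_const _) (hcross.const_mul _), integral_const, integral_const_mul,
    integral_const_mul, integral_inner hint]
  simp

theorem stmt_14_general {Ω : Type*} [MeasurableSpace Ω] (μpr : Measure Ω) [IsProbabilityMeasure μpr]
    {d m : ℕ} (μ L γ : ℝ) (hμ : 0 < μ) (hγ : 0 < γ)
    (g : EuclideanSpace ℝ (Fin d) → ℝ)
    (g' : EuclideanSpace ℝ (Fin d) → EuclideanSpace ℝ (Fin d))
    (ystar : EuclideanSpace ℝ (Fin d))
    (hsc : ∀ y z, g y + ⟪g' y, z - y⟫_ℝ + μ / 2 * ‖z - y‖ ^ 2 ≤ g z)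
    (hsmooth : ∀ y z, ‖g' y - g' z‖ ≤ L * ‖y - z‖)
    (hmin : ∀ z, g ystar ≤ g z)
    (θ : Fin m → ℝ) (hθ : ∀ k, 0 ≤ θ k) (hθ1 : ∑ k, θ k = 1)
    (yk : Fin m → EuclideanSpace ℝ (Fin d)) (y : EuclideanSpace ℝ (Fin d))
    (h : Ω → EuclideanSpace ℝ (Fin d)) (hmem : MemLp h 2 μpr)
    (hmean : ∫ ω, h ω ∂μpr = ∑ k, θ k • g' (yk k)) :
    ∫ ω, ‖(y - γ • h ω) - ystar‖ ^ 2 ∂μpr ≤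
      (1 - γ * μ / 2) * ‖y - ystar‖ ^ 2 + γ ^ 2 * ∫ ω, ‖h ω‖ ^ 2 ∂μpr
        + 2 * γ * L * ∑ k, θ k * ‖y - yk k‖ ^ 2 := by
  have hcross : μ / 4 * ‖y - ystar‖ ^ 2 - L * ∑ k, θ k * ‖y - yk k‖ ^ 2
      ≤ ⟪y - ystar, ∫ ω, h ω ∂μpr⟫_ℝ := by
    have hdrift : L * ∑ k, θ k * ‖y - yk k‖ ^ 2 = ∑ k, θ k * (L * ‖y - yk k‖ ^ 2) := by
      simp only [Finset.mul_sum, mul_left_comm]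
    rw [hmean, hdrift]
    refine sub_sum_mul_le_inner_sum_smul (u := y - ystar) (fun k _ => hθ k) hθ1 fun k _ => ?_
    rw [real_inner_comm]
    exact le_inner_grad_sub_minimizer hsc hμ.le hsmooth hmin (yk k) y
  simp_rw [sub_right_comm y, integral_norm_sub_smul_sq hmem]
  linarith [mul_le_mul_of_nonneg_left hcross (by positivity : (0 : ℝ) ≤ 2 * γ)]

/-- Per-iteration inner-problem contraction with client drift. -/
theorem stmt_14 {Ω : Type*} [MeasurableSpace Ω] (μpr : Measure Ω) [IsProbabilityMeasure μpr]
    {d m : ℕ} (μ L γ : ℝ) (hμ : 0 < μ) (hL : 0 < L) (hγ : 0 < γ)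
    (g : EuclideanSpace ℝ (Fin d) → ℝ)
    (g' : EuclideanSpace ℝ (Fin d) → EuclideanSpace ℝ (Fin d))
    (ystar : EuclideanSpace ℝ (Fin d))
    (hsc : ∀ y z, g y + ⟪g' y, z - y⟫_ℝ + μ / 2 * ‖z - y‖ ^ 2 ≤ g z)
    (hsmooth : ∀ y z, ‖g' y - g' z‖ ≤ L * ‖y - z‖)
    (hmin : ∀ z, g ystar ≤ g z)
    (θ : Fin m → ℝ) (hθ : ∀ k, 0 ≤ θ k) (hθ1 : ∑ k, θ k = 1)
    (yk : Fin m → EuclideanSpace ℝ (Fin d)) (y : EuclideanSpace ℝ (Fin d))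
    (h : Ω → EuclideanSpace ℝ (Fin d)) (hmem : MemLp h 2 μpr)
    (hmean : ∫ ω, h ω ∂μpr = ∑ k, θ k • g' (yk k)) :
    ∫ ω, ‖(y - γ • h ω) - ystar‖ ^ 2 ∂μpr ≤
      (1 - γ * μ / 2) * ‖y - ystar‖ ^ 2 + γ ^ 2 * ∫ ω, ‖h ω‖ ^ 2 ∂μpr
        + 2 * γ * L * ∑ k, θ k * ‖y - yk k‖ ^ 2 :=
  stmt_14_general μpr μ L γ hμ hγ g g' ystar hsc hsmooth hmin θ hθ hθ1 yk y h hmem hmean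
end
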